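/- arXiv:2111.11741 — 2 statements merged into one kernel-verified Lean document; each statement's English description precedes it below -/
import Mathlib

section
/- Let W ∈ ℝ^{p×p} be a real symmetric matrix with orthogonal diagonalization W = U D Uᵀ where U is orthogonal and D diagonal with diagonal entries λ_j satisfying 0 ≤ λ_j ≤ 1 for all j. Then lim_{m→∞} (I − W)^m s = U Z Uᵀ s for every s ∈ ℝ^p, where Z is the diagonal matrix with Z_jj = 1 if λ_j = 0 and Z_jj = 0 otherwise. -/
/-! Conjugation by the orthogonal `U` turns `(1 - W) ^ m` into the diagonal matrix with entries
`(1 - λ_j) ^ m`, and each entry tends to `1` if `λ_j = 0` and to `0` otherwise, since then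
`|1 - λ_j| < 1`. -/

open Matrix Filter Topology

theorem conj_pow_of_mul_eq_one {M : Type*} [Monoid M] {u v : M} (huv : u * v = 1)
    (hvu : v * u = 1) (d : M) (m : ℕ) : (u * d * v) ^ m = u * d ^ m * v := by
  induction m with
  | zero => simp [huv]
  | succ m ih =>
    rw [pow_succ, ih, pow_succ]
    calc u * d ^ m * v * (u * d * v) = u * d ^ m * (v * u) * d * v := by noncomm_ring
      _ = u * (d ^ m * d) * v := by rw [hvu, mul_one, mul_assoc u]

theorem one_sub_conj_of_mul_eq_one {R : Type*} [Ring R] {u v : R} (huv : u * v = 1) (d : R) :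
    1 - u * d * v = u * (1 - d) * v := by
  rw [mul_sub, sub_mul, mul_one, huv]

theorem tendsto_one_sub_pow {x : ℝ} (hx₀ : 0 ≤ x) (hx₂ : x < 2) :
    Tendsto (fun m : ℕ => (1 - x) ^ m) atTop (𝓝 (if x = 0 then 1 else 0)) := by
  rcases hx₀.eq_or_lt with rfl | hpos
  · simp
  · rw [if_neg hpos.ne']
    exact tendsto_pow_atTop_nhds_zero_of_abs_lt_one (abs_sub_lt_iff.2 ⟨by linarith, by linarith⟩)

theorem DIF_convergence_general (p : ℕ) (W U : Matrix (Fin p) (Fin p) ℝ) (l : Fin p → ℝ)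
    (hU : U * Uᵀ = 1) (hU' : Uᵀ * U = 1)
    (hW : W = U * Matrix.diagonal l * Uᵀ)
    (hl : ∀ j, 0 ≤ l j ∧ l j ≤ 1) (s : Fin p → ℝ) :
    Filter.Tendsto (fun m : ℕ => ((1 - W) ^ m).mulVec s) Filter.atTop
      (nhds ((U * Matrix.diagonal (fun j => if l j = 0 then (1 : ℝ) else 0) * Uᵀ).mulVec s)) := by
  have hpow : ∀ m : ℕ, (1 - W) ^ m = U * diagonal (fun j => (1 - l j) ^ m) * Uᵀ := fun m => by
    rw [hW, one_sub_conj_of_mul_eq_one hU, conj_pow_of_mul_eq_one hU hU', ← diagonal_one,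
      diagonal_sub, diagonal_pow]
    rfl
  have hdiag : Tendsto (fun m : ℕ => diagonal fun j => (1 - l j) ^ m) atTop
      (𝓝 (diagonal fun j => if l j = 0 then (1 : ℝ) else 0)) :=
    (continuous_id.matrix_diagonal.tendsto _).comp <| tendsto_pi_nhds.2 fun j =>
      tendsto_one_sub_pow (hl j).1 (by linarith [(hl j).2])
  simp only [hpow]
  exact (((continuous_const.matrix_mul continuous_id).matrix_mul continuous_const).matrix_mulVec
    continuous_const).tendsto _ |>.comp hdiag

theorem DIF_convergence (p : ℕ) (W U : Matrix (Fin p) (Fin p) ℝ) (l : Fin p → ℝ)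
    (hWsymm : Wᵀ = W)
    (hU : U * Uᵀ = 1) (hU' : Uᵀ * U = 1)
    (hW : W = U * Matrix.diagonal l * Uᵀ)
    (hl : ∀ j, 0 ≤ l j ∧ l j ≤ 1) (s : Fin p → ℝ) :
    Filter.Tendsto (fun m : ℕ => ((1 - W) ^ m).mulVec s) Filter.atTop
      (nhds ((U * Matrix.diagonal (fun j => if l j = 0 then (1 : ℝ) else 0) * Uᵀ).mulVec s)) :=
  DIF_convergence_general p W U l hU hU' hW hl s
end

section
/- Let W ∈ ℝ^{p×p} be symmetric with eigenvalues λ_j ∈ [0,1], of which k are zero, diagonalized W = U D Uᵀ with U orthogonal. Let s ∈ ℝ^p, \tilde{s} = Uᵀ s, and δ > 0. If N ∈ ℕ satisfies N^N/(N+1)^{N+1} < δ/(‖\tilde{s}‖_∞ √(p−k)), then ‖(I−W)^{N+1} s − (I−W)^N s‖₂ < δ. -/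
/-!
In the eigenbasis of `W` the vector `(I - W)^(N+1) s - (I - W)^N s` has coordinates
`-λ_j (1 - λ_j)^N s̃_j`, and the orthogonal change of basis preserves the Euclidean norm.
AM-GM gives `x (1 - x)^N ≤ N^N / (N+1)^(N+1)` on `[0, 1]`, so each of the at most
`p - k` nonzero coordinates is bounded by `N^N / (N+1)^(N+1) ‖s̃‖_∞`.
-/

open Matrix

lemma mul_one_sub_pow_le (N : ℕ) {x : ℝ} (hx : x ≤ 1) :
    x * (1 - x) ^ N ≤ (N : ℝ) ^ N / ((N : ℝ) + 1) ^ (N + 1) := by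
  rcases N.eq_zero_or_pos with rfl | hN
  · simpa using hx
  have hN' : (0 : ℝ) < N := by exact_mod_cast hN
  -- AM-GM through `1 + t ≤ exp t`, applied at `t = (N + 1) x - 1` and at `-t / N`.
  set t : ℝ := (N + 1) * x - 1 with ht
  have hfactor : 1 - t / N = (N + 1) * (1 - x) / N := by
    rw [ht]; field_simp; ring
  have hfactor_nonneg : 0 ≤ 1 - t / N := by
    rw [hfactor]; have : 0 ≤ 1 - x := by linarith
    positivity
  have hprod : (1 + t) * (1 - t / N) ^ N ≤ 1 :=
    calc (1 + t) * (1 - t / N) ^ N ≤ Real.exp t * Real.exp (-t / N) ^ N := by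
          refine mul_le_mul ?_ (pow_le_pow_left₀ hfactor_nonneg ?_ N) (by positivity)
            (by positivity)
          · linarith [Real.add_one_le_exp t]
          · linarith [Real.add_one_le_exp (-t / N), neg_div (N : ℝ) t]
      _ = 1 := by
          rw [← Real.exp_nat_mul, ← Real.exp_add, mul_div_cancel₀ _ hN'.ne', add_neg_cancel,
            Real.exp_zero]
  rw [le_div_iff₀ (by positivity)]
  calc x * (1 - x) ^ N * ((N : ℝ) + 1) ^ (N + 1) = N ^ N * ((1 + t) * (1 - t / N) ^ N) := by
        rw [hfactor, div_pow, mul_pow, ht]; field_simp; ring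
    _ ≤ N ^ N := mul_le_of_le_one_right (by positivity) hprod

lemma abs_one_sub_pow_succ_sub_pow_le (N : ℕ) {x : ℝ} (hx₀ : 0 ≤ x) (hx₁ : x ≤ 1) :
    |(1 - x) ^ (N + 1) - (1 - x) ^ N| ≤ (N : ℝ) ^ N / ((N : ℝ) + 1) ^ (N + 1) := by
  have hx : (1 - x) ^ (N + 1) - (1 - x) ^ N = -(x * (1 - x) ^ N) := by ring
  have hnonneg : 0 ≤ x * (1 - x) ^ N := mul_nonneg hx₀ (pow_nonneg (by linarith) N)
  rw [hx, abs_neg, abs_of_nonneg hnonneg]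
  exact mul_one_sub_pow_le N hx₁

lemma one_sub_conj_pow {R : Type*} [Ring R] {u v : R} (huv : u * v = 1) (hvu : v * u = 1)
    (d : R) (m : ℕ) : (1 - u * d * v) ^ m = u * (1 - d) ^ m * v := by
  let U : Rˣ := ⟨u, v, huv, hvu⟩
  have hconj : 1 - u * d * v = U * (1 - d) * ↑U⁻¹ := by
    simp [U, mul_sub, sub_mul, huv]
  rw [hconj, Units.conj_pow]
  rfl

section Orthogonal

variable {n : Type*} [Fintype n] [DecidableEq n] {U : Matrix n n ℝ}

lemma sum_sq_mulVec_of_transpose_mul_self (hU : Uᵀ * U = 1) (v : n → ℝ) :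
    ∑ i, (U *ᵥ v) i ^ 2 = ∑ i, v i ^ 2 := by
  have hdot : ∀ w : n → ℝ, ∑ i, w i ^ 2 = w ⬝ᵥ w := fun w => by
    simp only [dotProduct, sq]
  rw [hdot, hdot, dotProduct_mulVec, ← mulVec_transpose, mulVec_mulVec, hU, one_mulVec]

lemma sum_sq_one_sub_conj_pow_succ_sub_pow (hU : U * Uᵀ = 1) (hU' : Uᵀ * U = 1)
    (l s : n → ℝ) (N : ℕ) :
    ∑ i, (((1 - U * diagonal l * Uᵀ) ^ (N + 1) *ᵥ s) i
        - ((1 - U * diagonal l * Uᵀ) ^ N *ᵥ s) i) ^ 2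
      = ∑ j, (((1 - l j) ^ (N + 1) - (1 - l j) ^ N) * (Uᵀ *ᵥ s) j) ^ 2 := by
  have hpow : ∀ m : ℕ,
      (1 - U * diagonal l * Uᵀ) ^ m = U * diagonal (fun j => (1 - l j) ^ m) * Uᵀ := fun m => by
    rw [one_sub_conj_pow hU hU', ← diagonal_one, diagonal_sub, diagonal_pow]
    rfl
  have hdiff : (1 - U * diagonal l * Uᵀ) ^ (N + 1) *ᵥ s - (1 - U * diagonal l * Uᵀ) ^ N *ᵥ s
      = U *ᵥ (diagonal (fun j => (1 - l j) ^ (N + 1) - (1 - l j) ^ N) *ᵥ (Uᵀ *ᵥ s)) := by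
    rw [← sub_mulVec, hpow, hpow, ← sub_mul, ← mul_sub, diagonal_sub, mulVec_mulVec,
      mulVec_mulVec, Matrix.mul_assoc]
  calc _ = ∑ i,
        (U *ᵥ (diagonal (fun j => (1 - l j) ^ (N + 1) - (1 - l j) ^ N) *ᵥ (Uᵀ *ᵥ s))) i ^ 2 := by
        rw [← hdiff]; rfl
    _ = _ := by rw [sum_sq_mulVec_of_transpose_mul_self hU']; simp only [mulVec_diagonal]

end Orthogonal

lemma sum_sq_le_card_mul_sq {ι : Type*} [Fintype ι] (g : ι → ℝ) (S : Finset ι) {B : ℝ}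
    (hS : ∀ j ∉ S, g j = 0) (hB : ∀ j ∈ S, |g j| ≤ B) :
    ∑ j, g j ^ 2 ≤ S.card * B ^ 2 := by
  rw [← Finset.sum_subset S.subset_univ fun j _ hj => by simp [hS j hj], ← nsmul_eq_mul]
  refine Finset.sum_le_card_nsmul _ _ _ fun j hj => ?_
  rw [← sq_abs]
  exact pow_le_pow_left₀ (abs_nonneg _) (hB j hj) 2

theorem DIF_stopping_criterion_bound_general (p : ℕ) (W U : Matrix (Fin p) (Fin p) ℝ)
    (l : Fin p → ℝ)
    (hU : U * Uᵀ = 1) (hU' : Uᵀ * U = 1)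
    (hW : W = U * Matrix.diagonal l * Uᵀ)
    (hl : ∀ j, 0 ≤ l j ∧ l j ≤ 1)
    (k : ℕ) (hk : k = (Finset.univ.filter (fun j => l j = 0)).card)
    (s : Fin p → ℝ) (δ : ℝ) (N : ℕ)
    (hN : (N : ℝ) ^ N / ((N : ℝ) + 1) ^ (N + 1)
        < δ / (‖Uᵀ.mulVec s‖ * Real.sqrt ((p : ℝ) - (k : ℝ)))) :
    Real.sqrt (∑ i, (((1 - W) ^ (N + 1)).mulVec s i - ((1 - W) ^ N).mulVec s i) ^ 2) < δ := by
  set c : ℝ := (N : ℝ) ^ N / ((N : ℝ) + 1) ^ (N + 1)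
  set t : Fin p → ℝ := Uᵀ *ᵥ s
  set S : Finset (Fin p) := Finset.univ.filter (fun j => l j ≠ 0)
  have hterm : ∀ j ∈ S, |((1 - l j) ^ (N + 1) - (1 - l j) ^ N) * t j| ≤ c * ‖t‖ := by
    intro j _
    rw [abs_mul]
    exact mul_le_mul (abs_one_sub_pow_succ_sub_pow_le N (hl j).1 (hl j).2) (norm_le_pi_norm t j)
      (abs_nonneg _) (by positivity)
  have hzero : ∀ j ∉ S, ((1 - l j) ^ (N + 1) - (1 - l j) ^ N) * t j = 0 := fun j hj => by
    have hlj : l j = 0 := by simpa [S] using hj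
    simp [hlj]
  have hcard : (S.card : ℝ) = p - k := by
    have := Finset.card_filter_add_card_filter_not (s := Finset.univ) (fun j => l j = 0)
    rw [Finset.card_univ, Fintype.card_fin, ← hk] at this
    rw [eq_sub_iff_add_eq']
    exact_mod_cast this
  -- otherwise `hN` would read `c < δ / 0 = 0`
  have hM : 0 < ‖t‖ * √(p - k) := by
    refine (by positivity : (0 : ℝ) ≤ ‖t‖ * √(p - k)).lt_of_ne' fun h0 => ?_
    rw [h0, div_zero] at hN
    linarith [show 0 ≤ c by positivity]
  calc √(∑ i, (((1 - W) ^ (N + 1) *ᵥ s) i - ((1 - W) ^ N *ᵥ s) i) ^ 2)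
      ≤ √(S.card * (c * ‖t‖) ^ 2) := by
        rw [hW, sum_sq_one_sub_conj_pow_succ_sub_pow hU hU']
        exact Real.sqrt_le_sqrt (sum_sq_le_card_mul_sq _ S hzero hterm)
    _ = c * (‖t‖ * √(p - k)) := by
        rw [Real.sqrt_mul (Nat.cast_nonneg _), Real.sqrt_sq (by positivity), hcard]; ring
    _ < δ := (lt_div_iff₀ hM).1 hN

theorem DIF_stopping_criterion_bound (p : ℕ) (W U : Matrix (Fin p) (Fin p) ℝ)
    (l : Fin p → ℝ)
    (hWsymm : Wᵀ = W)
    (hU : U * Uᵀ = 1) (hU' : Uᵀ * U = 1)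
    (hW : W = U * Matrix.diagonal l * Uᵀ)
    (hl : ∀ j, 0 ≤ l j ∧ l j ≤ 1)
    (k : ℕ) (hk : k = (Finset.univ.filter (fun j => l j = 0)).card)
    (s : Fin p → ℝ) (δ : ℝ) (hδ : 0 < δ) (N : ℕ)
    (hN : (N : ℝ) ^ N / ((N : ℝ) + 1) ^ (N + 1)
        < δ / (‖Uᵀ.mulVec s‖ * Real.sqrt ((p : ℝ) - (k : ℝ)))) :
    Real.sqrt (∑ i, (((1 - W) ^ (N + 1)).mulVec s i - ((1 - W) ^ N).mulVec s i) ^ 2) < δ :=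
  DIF_stopping_criterion_bound_general p W U l hU hU' hW hl k hk s δ N hN
end
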